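/- arXiv:2410.00831 — 3 statements merged into one kernel-verified Lean document; each statement's English description precedes it below -/
import Mathlib

section
/- The total variation distance d_n(N) between the law of the n-step card simulation and the uniform measure on Ω_n equals the sum over all (λ_1,...,λ_{2d}) with nonnegative integer entries summing to n of [ C(N-n; K-λ_1,...,K-λ_{2d}) C(n; λ_1,...,λ_{2d}) / C(N; K,...,K) − (2d)^{-n} C(n; λ_1,...,λ_{2d}) ]^+, i.e., it coincides with the total variation distance between a multivariate hypergeometric distribution H(N; K,...,K; n) and a multinomial distribution B(n; 1/(2d),...,1/(2d)). -/
/-!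
Label card `c` of the `N = LK` cards by `(c + 1) % L`, so that every label occurs `K` times.
A permutation `σ` produces `ω` iff `j ↦ σ j` (`j < n`) is a label-preserving injection
`Fin n ↪ Fin N`, and each such injection extends to `(N - n)!` permutations. Choosing the
injection one label at a time gives `∏ᵢ K (K - 1) ⋯ (K - λᵢ + 1)` of them, where `λ` is the
occupancy vector of `ω`. Hence `μ_X(ω) = (N - n)! ∏ᵢ K! / (K - λᵢ)! / N!
= C(N - n; K - λ) / C(N; K, …, K)` depends on `ω` only through `λ`, and grouping the `ω` by
`λ`, each class having `C(n; λ)` elements, gives the formula.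
-/

open Finset

/-- Multinomial coefficient with integer arguments, interpreted as `0`
whenever some argument is negative. -/
def mcoef {ℓ : ℕ} (k : Fin ℓ → ℤ) : ℕ :=
  if ∀ i, 0 ≤ k i then Nat.multinomial Finset.univ (fun i => (k i).toNat) else 0

open Nat Equiv

section Perm

variable {α β γ : Type*} [Fintype α] [DecidableEq α] [Fintype β]

lemma card_perm_fixing_range (e : β ↪ α) :
    #{σ : Perm α | ∀ b, σ (e b) = e b} = (Fintype.card α - Fintype.card β)! := by
  let p : α → Prop := fun a => a ∉ Set.range e
  have hfix : {σ : Perm α // ∀ b, σ (e b) = e b} ≃ {σ : Perm α // ∀ a, ¬ p a → σ a = a} :=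
    subtypeEquivRight fun σ => by simp [p]
  rw [← Fintype.card_subtype,
    Fintype.card_congr (hfix.trans (Perm.subtypeEquivSubtypePerm p).symm),
    Fintype.card_perm, Fintype.card_subtype_compl, Set.card_range_of_injective e.injective]

lemma card_perm_extending (e f : β ↪ α) :
    #{σ : Perm α | ∀ b, σ (e b) = f b} = (Fintype.card α - Fintype.card β)! := by
  obtain ⟨τ, hτ⟩ := Perm.exists_extending_pair e f e.injective f.injective
  rw [← card_perm_fixing_range e]
  refine card_nbij' (τ⁻¹ * ·) (τ * ·) ?_ ?_ (fun σ _ => by simp) (fun σ _ => by simp)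
  · intro σ hσ
    simp_all [← hτ]
  · intro σ hσ
    simp_all

lemma card_perm_label_comp [DecidableEq γ] (e : β ↪ α) (label : α → γ) (ω : β → γ) :
    #{σ : Perm α | ∀ b, label (σ (e b)) = ω b}
      = (Fintype.card α - Fintype.card β)! * #{f : β ↪ α | ∀ b, label (f b) = ω b} := by
  rw [card_eq_sum_card_fiberwise (f := fun σ : Perm α => e.trans σ.toEmbedding)
    (t := {f : β ↪ α | ∀ b, label (f b) = ω b}) (fun σ hσ => by simpa using hσ),
    sum_const_nat fun f hf => ?_, mul_comm]
  rw [filter_filter, ← card_perm_extending e f]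
  refine congrArg card (filter_congr fun σ _ => ?_)
  simp only [mem_filter, mem_univ, true_and] at hf
  constructor
  · rintro ⟨-, rfl⟩ b
    rfl
  · intro h
    exact ⟨fun b => h b ▸ hf b, Function.Embedding.ext h⟩

end Perm

section Embedding

variable {α β γ : Type*}

def embeddingFiberwiseEquiv (label : α → γ) (ω : β → γ) :
    {f : β ↪ α // ∀ b, label (f b) = ω b} ≃ ∀ c, ({b // ω b = c} ↪ {a // label a = c}) where
  toFun f c := ⟨fun b => ⟨f.1 b, (f.2 b).trans b.2⟩,
    fun _ _ h => Subtype.ext (f.1.injective (congrArg Subtype.val h))⟩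
  invFun F :=
    ⟨((sigmaFiberEquiv ω).symm.toEmbedding.trans
        (Function.Embedding.sigmaMap (Function.Embedding.refl γ) F)).trans
        (sigmaFiberEquiv label).toEmbedding,
      fun b => (F (ω b) ⟨b, rfl⟩).2⟩
  left_inv _ := rfl
  right_inv F := by
    funext c
    ext ⟨b, rfl⟩
    rfl

lemma card_embedding_fiberwise [Fintype α] [DecidableEq α] [Fintype β] [Fintype γ]
    [DecidableEq γ] (label : α → γ) (ω : β → γ) :
    #{f : β ↪ α | ∀ b, label (f b) = ω b}
      = ∏ c, (#{a | label a = c}).descFactorial #{b | ω b = c} := by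
  rw [← Fintype.card_subtype, Fintype.card_congr (embeddingFiberwiseEquiv label ω),
    Fintype.card_pi]
  refine prod_congr rfl fun c _ => ?_
  rw [Fintype.card_embedding_eq, Fintype.card_subtype, Fintype.card_subtype]

end Embedding

section Occupancy

variable {β γ : Type*} [Fintype β] [DecidableEq γ]

def occupancy (ω : β → γ) (c : γ) : ℕ := #{b | ω b = c}

lemma sum_occupancy [Fintype γ] (ω : β → γ) : ∑ c, occupancy ω c = Fintype.card β :=
  (card_eq_sum_card_fiberwise fun b _ => mem_univ (ω b)).symm

open MvPolynomial in
lemma prod_X_eq_monomial_occupancy [Fintype γ] (ω : β → γ) :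
    ∏ b, (X (ω b) : MvPolynomial γ ℕ)
      = monomial (Finsupp.equivFunOnFinite.symm (occupancy ω)) 1 := by
  have : Finsupp.equivFunOnFinite.symm (occupancy ω) = ∑ b, Finsupp.single (ω b) 1 := by
    ext c
    simp [occupancy, Finsupp.single_apply]
  rw [this, monomial_sum_one]
  rfl

open MvPolynomial in
lemma card_occupancy_eq [Fintype γ] [DecidableEq β] {lam : γ → ℕ}
    (h : ∑ c, lam c = Fintype.card β) :
    #{ω : β → γ | occupancy ω = lam} = multinomial univ lam := by
  -- compare the coefficients of `X ^ lam` in `(∑ c, X c) ^ |β| = ∑ ω, ∏ b, X (ω b)`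
  set m := Finsupp.equivFunOnFinite.symm lam
  have hcoeff := coeff_sum_X_pow_of_fintype (R := ℕ) m (Fintype.card β)
  rw [← Finset.card_univ, ← prod_const, prod_univ_sum, Fintype.piFinset_univ] at hcoeff
  simp only [prod_X_eq_monomial_occupancy, coeff_sum, coeff_monomial] at hcoeff
  have hsum : (m.sum fun _ k => k) = #(univ : Finset β) := by
    rw [Finsupp.sum_fintype _ _ (fun _ => rfl), Finset.card_univ, ← h]
    rfl
  rw [if_pos hsum, ← Finsupp.multinomial_of_support_subset (subset_univ _)] at hcoeff
  simpa [m, sum_boole] using hcoeff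

lemma sum_comp_occupancy {M : Type*} [AddCommMonoid M] {n L : ℕ} (g : (Fin L → ℕ) → M) :
    ∑ ω : Fin n → Fin L, g (occupancy ω)
      = ∑ lam ∈ Finset.Nat.antidiagonalTuple L n, multinomial univ lam • g lam := by
  rw [← sum_fiberwise_of_maps_to (g := occupancy) (t := Finset.Nat.antidiagonalTuple L n)
    fun ω _ => Finset.Nat.mem_antidiagonalTuple.2 (by simpa using sum_occupancy ω)]
  refine sum_congr rfl fun lam hlam => ?_
  rw [sum_congr rfl fun ω hω => by rw [(mem_filter.1 hω).2], sum_const,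
    card_occupancy_eq (by simpa using Finset.Nat.mem_antidiagonalTuple.1 hlam)]

end Occupancy

lemma card_filter_succ_mod_eq {L : ℕ} (K : ℕ) (i : Fin L) :
    #{c : Fin (L * K) | ((c : ℕ) + 1) % L = i} = K := by
  have hL : 0 < L := i.pos
  let q : ℕ → Prop := fun k => k ≡ i [MOD L]
  have hfin : #{c : Fin (L * K) | ((c : ℕ) + 1) % L = i}
      = count (fun k => q (k + 1)) (L * K) := by
    rw [count_eq_card_filter_range, ← card_map Fin.valEmbedding, map_filter',
      Fin.map_valEmbedding_univ, Nat.Iio_eq_range]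
    refine congrArg card (filter_congr fun b hb => ?_)
    simp [q, Nat.ModEq, Nat.mod_eq_of_lt i.isLt, Fin.exists_iff, mem_range.1 hb]
  -- `L * K ≡ 0`, so shifting the window `[0, LK)` by one does not change the count
  have hshift : count (fun k => q (k + 1)) (L * K) = count q (L * K) := by
    have h1 := count_succ' q (L * K)
    have h2 := count_succ q (L * K)
    have h3 : q (L * K) ↔ q 0 := by simp [q, Nat.ModEq]
    simp only [h3] at h2
    omega
  rw [hfin, hshift, count_modEq_card _ hL]
  simp [hL]

lemma card_perm_succ_mod_eq {L K n : ℕ} (hL : 0 < L) (hn : n ≤ L * K) (ω : Fin n → Fin L) :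
    #{σ : Perm (Fin (L * K)) | ∀ j, ((σ (Fin.castLE hn j) : ℕ) + 1) % L = ω j}
      = (L * K - n)! * ∏ i, K.descFactorial (occupancy ω i) := by
  let label : Fin (L * K) → Fin L := fun c => ⟨((c : ℕ) + 1) % L, Nat.mod_lt _ hL⟩
  have hfiber (i : Fin L) : #{c | label c = i} = K := by
    simpa [label, Fin.ext_iff] using card_filter_succ_mod_eq K i
  have h := card_perm_label_comp (Fin.castLEEmb hn) label ω
  simp only [card_embedding_fiberwise, hfiber, Fintype.card_fin] at h
  simpa [label, Fin.ext_iff, occupancy] using h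

lemma cast_multinomial {ι 𝕜 : Type*} [Field 𝕜] [CharZero 𝕜] (s : Finset ι) (f : ι → ℕ) :
    (multinomial s f : 𝕜) = (∑ i ∈ s, f i)! / ∏ i ∈ s, ((f i)! : 𝕜) := by
  rw [eq_div_iff (prod_ne_zero_iff.2 fun i _ => cast_ne_zero.2 (factorial_ne_zero _)), mul_comm]
  exact_mod_cast multinomial_spec s f

lemma cast_descFactorial_eq_div {𝕜 : Type*} [Field 𝕜] [CharZero 𝕜] {K l : ℕ} (h : l ≤ K) :
    (K.descFactorial l : 𝕜) = K ! / (K - l)! := by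
  rw [eq_div_iff (cast_ne_zero.2 (factorial_ne_zero _)), mul_comm]
  exact_mod_cast factorial_mul_descFactorial h

lemma mcoef_sub_div_multinomial_eq {L K n : ℕ} {lam : Fin L → ℕ} (h : ∑ i, lam i = n) :
    (mcoef (fun i => (K : ℤ) - lam i) : ℝ) / multinomial univ (fun _ : Fin L => K)
      = ((L * K - n)! * ∏ i, K.descFactorial (lam i) : ℕ) / (L * K)! := by
  by_cases hle : ∀ i, lam i ≤ K
  · have hm : mcoef (fun i => (K : ℤ) - lam i) = multinomial univ (fun i => K - lam i) := by
      rw [mcoef, if_pos fun i => by have := hle i; omega]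
      congr 1
      funext i
      omega
    have hsub : ∑ i, (K - lam i) = L * K - n := by
      rw [sum_tsub_distrib _ fun i _ => hle i, h]
      simp
    rw [hm]
    push_cast
    rw [cast_multinomial, cast_multinomial, hsub]
    simp only [sum_const, prod_const, Finset.card_fin, smul_eq_mul]
    rw [prod_congr rfl fun i _ => cast_descFactorial_eq_div (𝕜 := ℝ) (hle i), prod_div_distrib,
      prod_const, Finset.card_fin]
    field_simp
  · push Not at hle
    obtain ⟨i, hi⟩ := hle
    rw [mcoef, if_neg fun h => by have := h i; omega,
      prod_eq_zero (mem_univ i) (descFactorial_eq_zero_iff_lt.2 hi)]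
    simp

theorem tv_distance_formula_general (d K n : ℕ) (hn : n < 2*d*K) :
    ∑ ω : Fin n → Fin (2*d),
      max
        (((Finset.univ.filter (fun σ : Equiv.Perm (Fin (2*d*K)) =>
              ∀ j : Fin n, (((σ (Fin.castLE hn.le j) : ℕ) + 1) % (2*d)) = (ω j : ℕ))).card : ℝ)
              / (Nat.factorial (2*d*K))
          - ((2*d : ℝ))⁻¹ ^ n) 0
    = ∑ lam ∈ Finset.Nat.antidiagonalTuple (2*d) n,
        max
          ((mcoef (fun i => (K : ℤ) - (lam i : ℤ)) : ℝ)
              * (Nat.multinomial Finset.univ lam : ℝ)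
              / (Nat.multinomial Finset.univ (fun _ : Fin (2*d) => K) : ℝ)
            - ((2*d : ℝ))⁻¹ ^ n * (Nat.multinomial Finset.univ lam : ℝ)) 0 := by
  let excess : (Fin (2*d) → ℕ) → ℝ := fun lam =>
    max ((((2*d*K - n)! * ∏ i, K.descFactorial (lam i) : ℕ) : ℝ) / (2*d*K)! - (2*d : ℝ)⁻¹ ^ n) 0
  calc _ = ∑ ω : Fin n → Fin (2*d), excess (occupancy ω) :=
        sum_congr rfl fun ω _ => by rw [card_perm_succ_mod_eq (Nat.pos_of_lt_mul_right hn)]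
    _ = _ := sum_comp_occupancy excess
    _ = _ := by
      refine sum_congr rfl fun lam hlam => ?_
      dsimp only [excess]
      rw [← mcoef_sub_div_multinomial_eq (Finset.Nat.mem_antidiagonalTuple.1 hlam), nsmul_eq_mul,
        mul_max_of_nonneg _ _ (cast_nonneg _), mul_zero]
      ring_nf

/-- The total variation distance `d_n(N)` between the law of the `n`-step card
simulation (uniform permutation of `N = 2dK` cards) and the uniform measure on
`Ω_n = {0,…,2d-1}^n` equals the multivariate hypergeometric/multinomial sum. -/
theorem tv_distance_formula (d K n : ℕ) (hd : 0 < d) (hn : n < 2*d*K) :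
    ∑ ω : Fin n → Fin (2*d),
      max
        (((Finset.univ.filter (fun σ : Equiv.Perm (Fin (2*d*K)) =>
              ∀ j : Fin n, (((σ (Fin.castLE hn.le j) : ℕ) + 1) % (2*d)) = (ω j : ℕ))).card : ℝ)
              / (Nat.factorial (2*d*K))
          - ((2*d : ℝ))⁻¹ ^ n) 0
    = ∑ lam ∈ Finset.Nat.antidiagonalTuple (2*d) n,
        max
          ((mcoef (fun i => (K : ℤ) - (lam i : ℤ)) : ℝ)
              * (Nat.multinomial Finset.univ lam : ℝ)
              / (Nat.multinomial Finset.univ (fun _ : Fin (2*d) => K) : ℝ)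
            - ((2*d : ℝ))⁻¹ ^ n * (Nat.multinomial Finset.univ lam : ℝ)) 0 :=
  tv_distance_formula_general d K n hn
end

section
/- Let f(λ_1,...,λ_{2d}, N, n) = (2d)^n · C(N-n; K-λ_1,...,K-λ_{2d}) / C(N; K,...,K) where N = 2dK. If λ = (λ_1,...,λ_{2d}) has nonnegative integer entries summing to n with λ_i < λ_j, and λ^{i,j} is obtained from λ by increasing the i-th coordinate by 1 and decreasing the j-th coordinate by 1, then f(λ, N, n) ≤ f(λ^{i,j}, N, n). -/
open Finset

/-- The Radon–Nikodym derivative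
`f(λ, N, n) = (2d)^n C(N-n; K-λ_1,…,K-λ_{2d}) / C(N; K,…,K)`, `N = 2dK`. -/
noncomputable def rnDeriv (d K n : ℕ) (lam : Fin (2*d) → ℕ) : ℝ :=
  (2*d : ℝ)^n * (mcoef (fun ℓ => (K : ℤ) - (lam ℓ : ℤ)) : ℝ)
    / (Nat.multinomial Finset.univ (fun _ : Fin (2*d) => K) : ℝ)

open Nat in
lemma multinomial_shift_le {m : ℕ} (f : Fin m → ℕ) (i j : Fin m) (hij : i ≠ j)
    (hlt : f j + 1 ≤ f i) :
    Nat.multinomial univ f ≤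
      Nat.multinomial univ
        (fun ℓ => if ℓ = i then f i - 1 else if ℓ = j then f j + 1 else f ℓ) := by
  set g : Fin m → ℕ := fun ℓ => if ℓ = i then f i - 1 else if ℓ = j then f j + 1 else f ℓ with hg
  have hi : i ∈ (univ : Finset (Fin m)) := mem_univ i
  have hj : j ∈ (univ : Finset (Fin m)).erase i := by simp [Ne.symm hij]
  have hprodf : ∏ ℓ, (f ℓ)! = (f i)! * ((f j)! * ∏ ℓ ∈ ((univ : Finset (Fin m)).erase i).erase j, (f ℓ)!) := by
    rw [← Finset.mul_prod_erase _ (fun ℓ => (f ℓ)!) hi, ← Finset.mul_prod_erase _ (fun ℓ => (f ℓ)!) hj]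
  have hprodg : ∏ ℓ, (g ℓ)! = (f i - 1)! * ((f j + 1)! * ∏ ℓ ∈ ((univ : Finset (Fin m)).erase i).erase j, (f ℓ)!) := by
    rw [← Finset.mul_prod_erase _ (fun ℓ => (g ℓ)!) hi, ← Finset.mul_prod_erase _ (fun ℓ => (g ℓ)!) hj]
    have : ∏ ℓ ∈ ((univ : Finset (Fin m)).erase i).erase j, (g ℓ)!
        = ∏ ℓ ∈ ((univ : Finset (Fin m)).erase i).erase j, (f ℓ)! := by
      apply Finset.prod_congr rfl
      intro x hx
      simp only [mem_erase] at hx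
      simp [hg, hx.1, hx.2.1]
    rw [this]
    simp [hg, Ne.symm hij]
  have key : (∏ ℓ, (g ℓ)!) * f i = (∏ ℓ, (f ℓ)!) * (f j + 1) := by
    rw [hprodf, hprodg]
    have h1 : (f i - 1)! * f i = (f i)! := by
      obtain ⟨a, ha⟩ : ∃ a, f i = a + 1 := ⟨f i - 1, by omega⟩
      rw [ha]
      simp [Nat.factorial_succ]
      ring
    have h2 : (f j)! * (f j + 1) = (f j + 1)! := by rw [Nat.factorial_succ]; ring
    calc (f i - 1)! * ((f j + 1)! * ∏ ℓ ∈ ((univ : Finset (Fin m)).erase i).erase j, (f ℓ)!) * f i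
        = ((f i - 1)! * f i) * ((f j + 1)! * ∏ ℓ ∈ ((univ : Finset (Fin m)).erase i).erase j, (f ℓ)!) := by ring
      _ = (f i)! * ((f j + 1)! * ∏ ℓ ∈ ((univ : Finset (Fin m)).erase i).erase j, (f ℓ)!) := by rw [h1]
      _ = (f i)! * (((f j)! * (f j + 1)) * ∏ ℓ ∈ ((univ : Finset (Fin m)).erase i).erase j, (f ℓ)!) := by rw [h2]
      _ = (f i)! * ((f j)! * ∏ ℓ ∈ ((univ : Finset (Fin m)).erase i).erase j, (f ℓ)!) * (f j + 1) := by ring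
  have hle : ∏ ℓ, (g ℓ)! ≤ ∏ ℓ, (f ℓ)! := by
    have := Nat.mul_le_mul_left (∏ ℓ, (g ℓ)!) hlt
    rw [key] at this
    exact Nat.le_of_mul_le_mul_right this (by omega)
  have hsum : ∑ ℓ, g ℓ = ∑ ℓ, f ℓ := by
    rw [← Finset.add_sum_erase _ g hi, ← Finset.add_sum_erase _ f hi,
        ← Finset.add_sum_erase _ g hj, ← Finset.add_sum_erase _ f hj]
    have : ∑ ℓ ∈ ((univ : Finset (Fin m)).erase i).erase j, g ℓ
        = ∑ ℓ ∈ ((univ : Finset (Fin m)).erase i).erase j, f ℓ := by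
      apply Finset.sum_congr rfl
      intro x hx
      simp only [mem_erase] at hx
      simp [hg, hx.1, hx.2.1]
    have hgi : g i = f i - 1 := by simp [hg]
    have hgj : g j = f j + 1 := by simp [hg, Ne.symm hij]
    rw [this, hgi, hgj]
    omega
  have hspecf := Nat.multinomial_spec (univ : Finset (Fin m)) f
  have hspecg := Nat.multinomial_spec (univ : Finset (Fin m)) g
  rw [hsum, ← hspecf] at hspecg
  have hgpos : 0 < ∏ ℓ, (g ℓ)! := Finset.prod_pos fun _ _ => Nat.factorial_pos _
  have : (∏ ℓ, (g ℓ)!) * Nat.multinomial univ f ≤ (∏ ℓ, (g ℓ)!) * Nat.multinomial univ g := by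
    calc (∏ ℓ, (g ℓ)!) * Nat.multinomial univ f ≤ (∏ ℓ, (f ℓ)!) * Nat.multinomial univ f :=
          Nat.mul_le_mul_right _ hle
      _ = (∏ ℓ, (g ℓ)!) * Nat.multinomial univ g := hspecg.symm
  exact Nat.le_of_mul_le_mul_left this hgpos

/-- Monotonicity of `f`: moving one unit of mass from a larger coordinate `λ_j`
to a smaller coordinate `λ_i` does not decrease `f`. -/
theorem rnDeriv_monotone (d K n : ℕ) (hd : 0 < d) (hn : n < 2*d*K)
    (lam : Fin (2*d) → ℕ) (hsum : ∑ ℓ, lam ℓ = n)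
    (i j : Fin (2*d)) (hij : lam i < lam j) :
    rnDeriv d K n lam
      ≤ rnDeriv d K n
          (fun ℓ => if ℓ = i then lam i + 1 else if ℓ = j then lam j - 1 else lam ℓ) := by
  have hne : i ≠ j := by intro h; rw [h] at hij; omega
  by_cases hb : ∀ ℓ, lam ℓ ≤ K
  · -- all entries bounded by K
    set lam' : Fin (2*d) → ℕ := fun ℓ => if ℓ = i then lam i + 1 else if ℓ = j then lam j - 1 else lam ℓ with hlam'
    have hjK : lam j ≤ K := hb j
    have hiK : lam i + 1 ≤ K := by have := hb j; omega
    set f : Fin (2*d) → ℕ := fun ℓ => K - lam ℓ with hf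
    have hm1 : mcoef (fun ℓ => (K : ℤ) - (lam ℓ : ℤ)) = Nat.multinomial univ f := by
      rw [mcoef, if_pos]
      · congr 1; funext ℓ; have := hb ℓ; simp only [hf]; omega
      · intro ℓ; have := hb ℓ; omega
    have hm2 : mcoef (fun ℓ => (K : ℤ) - (lam' ℓ : ℤ)) =
        Nat.multinomial univ (fun ℓ => if ℓ = i then f i - 1 else if ℓ = j then f j + 1 else f ℓ) := by
      rw [mcoef, if_pos]
      · congr 1; funext ℓ
        by_cases h1 : ℓ = i
        · subst h1; simp [hlam', hf] <;> omega
        · by_cases h2 : ℓ = j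
          · subst h2; simp [hlam', hf, h1] <;> omega
          · have := hb ℓ; simp [hlam', hf, h1, h2] <;> omega
      · intro ℓ
        by_cases h1 : ℓ = i
        · subst h1; simp [hlam'] <;> omega
        · by_cases h2 : ℓ = j
          · subst h2; simp [hlam', h1] <;> omega
          · have := hb ℓ; simp [hlam', h1, h2] <;> omega
    have hkey : Nat.multinomial univ f ≤
        Nat.multinomial univ (fun ℓ => if ℓ = i then f i - 1 else if ℓ = j then f j + 1 else f ℓ) := by
      apply multinomial_shift_le f i j hne
      simp only [hf]; omega
    rw [rnDeriv, rnDeriv, hm1, hm2]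
    have := hkey
    gcongr
  · -- some entry exceeds K : LHS is zero
    push_neg at hb
    obtain ⟨ℓ0, hℓ0⟩ := hb
    have h0 : mcoef (fun ℓ => (K : ℤ) - (lam ℓ : ℤ)) = 0 := by
      rw [mcoef, if_neg]
      push_neg
      exact ⟨ℓ0, by omega⟩
    rw [rnDeriv, h0]
    simp only [Nat.cast_zero, mul_zero, zero_div]
    rw [rnDeriv]
    positivity
end

section
/- Uniform boundedness of the support of the likelihood-ratio superlevel set: fix c ≥ 2d and define Φ_n = { A = (a^1,...,a^{2d}) ∈ ℝ^{2d} : λ_i := (n + a^i√n)/(2d) are nonnegative integers summing to n and f(λ_1,...,λ_{2d}, cn, n) ≥ 1 }. Then ⋃_{n≥1} Φ_n is a bounded subset of ℝ^{2d}. -/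
open Finset Real

/-- The superlevel set `Φ_n` of the likelihood ratio, in rescaled coordinates
`λ_i = (n + a^i √n)/(2d)`. -/
def Phi (d : ℕ) (K : ℕ → ℕ) (n : ℕ) : Set (Fin (2*d) → ℝ) :=
  {A | ∃ lam : Fin (2*d) → ℕ,
    (∀ i, (lam i : ℝ) = ((n : ℝ) + A i * Real.sqrt n) / (2*d)) ∧
    (∑ i, lam i = n) ∧ 1 ≤ rnDeriv d (K n) n lam}

/-!
If `f ≥ 1`, then with `N = 2dK` the falling factorial `N^(n)` is at most
`(2d)^n ∏ᵢ K^(λᵢ) = ∏ᵢ ∏_{j<λᵢ} (N - 2dj)`. Labelling the factor `N - 2dj` of colour `i` by the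
integer `2dj + i` makes the labels distinct, so after sorting the `m`-th factor is at most
`N - m + 2d - 1`: the numerator exceeds `N^(n)` by at most `(1 + 2d/(N - n))^n ≤ e^{2d}`.
If `λᵢ = μ + δ` with `n ≤ 2dμ`, set the top `δ` factors of colour `i` aside before sorting:
each of them is at most `N - n - k`, against `N - n + δ - k` in `N^(n)`, so together they lose
`(1 - δ/N)^δ ≤ e^{-δ²/N}`. Hence `δ² ≤ 4dn`, so `aⁱ = (2dλᵢ - n)/√n` is bounded above, and
`∑ᵢ aⁱ = 0` bounds it below.
-/

theorem Finset.prod_le_prod_range_card_of_antitone {h : ℕ → ℕ} (hh : Antitone h) (S : Finset ℕ) :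
    ∏ s ∈ S, h s ≤ ∏ m ∈ range #S, h m := by
  induction S using Finset.induction_on_max with
  | empty => simp
  | insert a S hlt ih =>
    have haS : a ∉ S := fun ha => lt_irrefl a (hlt a ha)
    have hcard : #S ≤ a := by
      simpa using card_le_card fun x hx => mem_range.2 (hlt x hx)
    rw [prod_insert haS, card_insert_of_notMem haS, prod_range_succ, mul_comm]
    exact Nat.mul_le_mul ih (hh hcard)

theorem prod_prod_range_sub_le {q : ℕ} (M : ℕ) (lam : Fin q → ℕ) :
    ∏ i, ∏ j ∈ range (lam i), (M - q * j) ≤ ∏ m ∈ range (∑ i, lam i), (M + q - 1 - m) := by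
  set enc : (Σ _ : Fin q, ℕ) → ℕ := fun p => q * p.2 + p.1
  have henc : enc.Injective := by
    rintro ⟨i, j⟩ ⟨i', j'⟩ h
    have hq : 0 < q := i.pos
    have hj : j = j' := by
      simpa [enc, Nat.mul_add_div hq, Nat.div_eq_of_lt i.isLt, Nat.div_eq_of_lt i'.isLt]
        using congrArg (· / q) h
    subst hj
    have hi : i = i' := Fin.ext (by simpa [enc] using h)
    rw [hi]
  have hanti : Antitone fun m => M + q - 1 - m := fun _ _ hab => Nat.sub_le_sub_left hab _
  calc ∏ i, ∏ j ∈ range (lam i), (M - q * j)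
      = ∏ p ∈ univ.sigma fun i => range (lam i), (M - q * p.2) :=
        (prod_sigma univ (fun i => range (lam i)) fun p => M - q * p.2).symm
    _ ≤ ∏ p ∈ univ.sigma fun i => range (lam i), (M + q - 1 - enc p) :=
        prod_le_prod' fun p _ => by have := p.1.isLt; simp only [enc]; omega
    _ = ∏ s ∈ (univ.sigma fun i => range (lam i)).image enc, (M + q - 1 - s) :=
        (prod_image henc.injOn).symm
    _ ≤ _ := by
        refine (prod_le_prod_range_card_of_antitone hanti _).trans_eq ?_
        rw [card_image_of_injective _ henc, card_sigma]
        simp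

theorem prod_prod_range_sub_le_mul {q : ℕ} (M : ℕ) (lam : Fin q → ℕ) {i : Fin q} {μ : ℕ}
    (hμ : μ ≤ lam i) :
    ∏ j, ∏ l ∈ range (lam j), (M - q * l) ≤
      (∏ m ∈ range (∑ j, lam j - (lam i - μ)), (M + q - 1 - m)) *
        ∏ k ∈ range (lam i - μ), (M - q * (μ + k)) := by
  set g : ℕ → ℕ := fun n => ∏ l ∈ range n, (M - q * l)
  set lam' := Function.update lam i μ
  have hsum : ∑ j, lam' j = ∑ j, lam j - (lam i - μ) := by
    have h' : ∑ j, lam' j = μ + ∑ j ∈ univ \ {i}, lam j := sum_update_of_mem (mem_univ i) lam μ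
    have h := sum_eq_add_sum_sdiff_singleton i lam (absurd (mem_univ i))
    omega
  have hprod : ∏ j, g (lam j) =
      (∏ j, g (lam' j)) * ∏ k ∈ range (lam i - μ), (M - q * (μ + k)) := by
    have hsplit : g (lam i) = g μ * ∏ k ∈ range (lam i - μ), (M - q * (μ + k)) := by
      rw [← prod_range_add, Nat.add_sub_cancel' hμ]
    simp only [lam', Function.apply_update (fun _ => g), prod_update_of_mem (mem_univ i)]
    rw [prod_eq_mul_prod_sdiff_singleton i (fun j => g (lam j)) (absurd (mem_univ i)), hsplit]
    ring
  rw [hprod, ← hsum]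
  exact Nat.mul_le_mul_right _ (prod_prod_range_sub_le M lam')

theorem Finset.prod_le_prod_mul_exp_pow {ι : Type*} {s : Finset ι} {a b : ι → ℝ} {x : ℝ}
    (hb : ∀ i ∈ s, 0 ≤ b i) (ha : ∀ i ∈ s, 0 ≤ a i) (h : ∀ i ∈ s, b i ≤ a i * (1 + x)) :
    ∏ i ∈ s, b i ≤ (∏ i ∈ s, a i) * exp x ^ #s := by
  rw [← prod_const, ← prod_mul_distrib]
  refine prod_le_prod hb fun i hi => (h i hi).trans (mul_le_mul_of_nonneg_left ?_ (ha i hi))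
  linarith [add_one_le_exp x]

theorem Nat.cast_descFactorial_add {R : Type*} [CommRing R] {M n δ : ℕ} (h : n + δ ≤ M) :
    (M.descFactorial (n + δ) : R) =
      (∏ m ∈ range n, ((M : R) - m)) * ∏ k ∈ range δ, ((M : R) - n - k) := by
  rw [Nat.descFactorial_eq_prod_range, prod_range_add, Nat.cast_mul, Nat.cast_prod,
    Nat.cast_prod]
  congr 1 <;> refine prod_congr rfl fun m hm => ?_ <;> rw [mem_range] at hm
  · rw [Nat.cast_sub (by omega)]
  · rw [Nat.cast_sub (by omega)]
    push_cast
    ring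

theorem cast_add_sub_sub_le_mul {M q m N : ℕ} (hm : m ≤ N) (hN : N < M) :
    ((M + q - 1 - m : ℕ) : ℝ) ≤ (M - m) * (1 + q / (M - N)) := by
  have hcast : ((M + q - 1 - m : ℕ) : ℝ) + m ≤ M + q := by
    exact_mod_cast (by omega : M + q - 1 - m + m ≤ M + q)
  have hmN : (m : ℝ) ≤ N := by exact_mod_cast hm
  have hNM : (0 : ℝ) < M - N := sub_pos.2 (by exact_mod_cast hN)
  have hq : (q : ℝ) ≤ (M - m) * q / (M - N) :=
    (le_div_iff₀ hNM).2 (by nlinarith [(q.cast_nonneg : (0 : ℝ) ≤ q)])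
  rw [mul_one_add, mul_div_assoc']
  linarith

theorem cast_sub_le_mul {M x n δ k : ℕ} (hx : n + δ + k ≤ x) (hM : n + δ + k ≤ M) :
    ((M - x : ℕ) : ℝ) ≤ (M - n - k) * (1 - δ / M) := by
  have hcast : ((M - x : ℕ) : ℝ) + n + δ + k ≤ M := by
    exact_mod_cast (by omega : M - x + n + δ + k ≤ M)
  have hδ : (M - n - k) * δ / M ≤ (δ : ℝ) :=
    div_le_of_le_mul₀ (M.cast_nonneg) (δ.cast_nonneg)
      (by nlinarith [(n + k : ℕ).cast_nonneg (α := ℝ), δ.cast_nonneg (α := ℝ)])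
  rw [mul_one_sub, mul_div_assoc']
  linarith

theorem cast_prod_range_add_sub_sub_le {M q n N : ℕ} (hn : n ≤ N) (hN : N < M) :
    ((∏ m ∈ range n, (M + q - 1 - m) : ℕ) : ℝ) ≤
      (∏ m ∈ range n, ((M : ℝ) - m)) * exp (q / (M - N)) ^ n := by
  have hle := prod_le_prod_mul_exp_pow (s := range n) (a := fun m => (M : ℝ) - m)
    (fun m _ => (M + q - 1 - m : ℕ).cast_nonneg)
    (fun m hm => sub_nonneg.2 (by exact_mod_cast (mem_range.1 hm).le.trans (hn.trans hN.le)))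
    fun m hm => cast_add_sub_sub_le_mul ((mem_range.1 hm).le.trans hn) hN
  rwa [card_range, ← Nat.cast_prod] at hle

theorem cast_prod_range_sub_le {M q n δ μ : ℕ} (hq : 1 ≤ q) (hμ : n + δ ≤ q * μ)
    (hM : 2 * (n + δ) ≤ M) :
    ((∏ k ∈ range δ, (M - q * (μ + k)) : ℕ) : ℝ) ≤
      (∏ k ∈ range δ, ((M : ℝ) - n - k)) * exp (-(δ / M)) ^ δ := by
  have hle := prod_le_prod_mul_exp_pow (s := range δ) (a := fun k => (M : ℝ) - n - k)
    (x := -(δ / M)) (fun k _ => (M - q * (μ + k) : ℕ).cast_nonneg)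
    (fun k hk => by
      have : n + k ≤ M := by have := mem_range.1 hk; omega
      have : ((n + k : ℕ) : ℝ) ≤ M := by exact_mod_cast this
      push_cast at this
      linarith)
    fun k hk => by
      have hqk : n + δ + k ≤ q * (μ + k) := by
        rw [Nat.mul_add]
        exact Nat.add_le_add hμ (Nat.le_mul_of_pos_left k hq)
      exact (cast_sub_le_mul hqk (by have := mem_range.1 hk; omega)).trans_eq (by ring)
  rwa [card_range, ← Nat.cast_prod] at hle

theorem sq_le_of_descFactorial_le {q M n δ μ : ℕ} (hM : 2 * (n + δ) ≤ M) (hμ : n + δ ≤ q * μ)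
    (h : M.descFactorial (n + δ) ≤
      (∏ m ∈ range n, (M + q - 1 - m)) * ∏ k ∈ range δ, (M - q * (μ + k))) :
    (δ : ℝ) ^ 2 ≤ 2 * q * (n + δ) := by
  rcases Nat.eq_zero_or_pos δ with rfl | hδ
  · simp only [CharP.cast_eq_zero, ne_eq, OfNat.ofNat_ne_zero, not_false_eq_true, zero_pow,
      add_zero]
    positivity
  have hq : 1 ≤ q := Nat.pos_of_ne_zero fun hq => by simp [hq] at hμ; omega
  have hMR : (2 * (n + δ) : ℝ) ≤ M := by exact_mod_cast hM
  have hδR : (1 : ℝ) ≤ δ := by exact_mod_cast hδ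
  set t : ℝ := M - (n + δ)
  have ht : 0 < t := by linarith
  have hMpos : (0 : ℝ) < M := by linarith
  have hB₁ := cast_prod_range_add_sub_sub_le (q := q) (Nat.le_add_right n δ) (by omega : n + δ < M)
  have hB₂ := cast_prod_range_sub_le hq hμ hM
  rw [Nat.cast_add] at hB₁
  have hdesc := Nat.cast_descFactorial_add (R := ℝ) (by omega : n + δ ≤ M)
  set D₁ := ∏ m ∈ range n, ((M : ℝ) - m)
  set D₂ := ∏ k ∈ range δ, ((M : ℝ) - n - k)
  have hD : 0 < (M.descFactorial (n + δ) : ℝ) := by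
    exact_mod_cast Nat.descFactorial_pos.2 (by omega)
  have hexp : 1 ≤ exp (q / t) ^ n * exp (-(δ / M)) ^ δ := by
    refine (le_mul_iff_one_le_right hD).1 ?_
    calc (M.descFactorial (n + δ) : ℝ) ≤ _ := Nat.cast_le.2 h
      _ = _ := Nat.cast_mul _ _
      _ ≤ D₁ * exp (q / t) ^ n * (D₂ * exp (-(δ / M)) ^ δ) :=
        mul_le_mul hB₁ hB₂ (Nat.cast_nonneg _) ((Nat.cast_nonneg _).trans hB₁)
      _ = _ := by rw [hdesc]; ring
  rw [← exp_nat_mul, ← exp_nat_mul, ← exp_add, one_le_exp_iff, mul_neg, ← sub_eq_add_neg,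
    sub_nonneg, mul_div_assoc', mul_div_assoc', div_le_div_iff₀ hMpos ht] at hexp
  have hnq : (0 : ℝ) ≤ n * q := by positivity
  have hsq : (δ : ℝ) ^ 2 * t ≤ 2 * n * q * t := by
    nlinarith [mul_le_mul_of_nonneg_left (by linarith : (M : ℝ) ≤ 2 * t) hnq]
  have : (0 : ℝ) ≤ q * δ := by positivity
  nlinarith [le_of_mul_le_mul_right hsq ht]

theorem sub_sq_le_of_descFactorial_le {q M n : ℕ} {lam : Fin q → ℕ} (hsum : ∑ i, lam i = n)
    (hM : 2 * n ≤ M) (h : M.descFactorial n ≤ ∏ i, ∏ j ∈ range (lam i), (M - q * j))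
    (i : Fin q) {μ : ℕ} (hμ : n ≤ q * μ) :
    ((lam i - μ : ℕ) : ℝ) ^ 2 ≤ 2 * q * n := by
  rcases le_total (lam i) μ with hle | hle
  · rw [Nat.sub_eq_zero_of_le hle]
    simp only [CharP.cast_eq_zero, ne_eq, OfNat.ofNat_ne_zero, not_false_eq_true, zero_pow]
    positivity
  have hδ : lam i - μ ≤ n :=
    hsum ▸ (Nat.sub_le _ _).trans (single_le_sum (fun j _ => Nat.zero_le (lam j)) (mem_univ i))
  obtain ⟨n', rfl⟩ : ∃ n', n = n' + (lam i - μ) := ⟨_, (Nat.sub_add_cancel hδ).symm⟩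
  have hsplit := prod_prod_range_sub_le_mul M lam hle
  rw [hsum, Nat.add_sub_cancel] at hsplit
  exact_mod_cast sq_le_of_descFactorial_le hM hμ (h.trans hsplit)

theorem Nat.prod_descFactorial_mul_multinomial {ι : Type*} (s : Finset ι) {K : ℕ} {k : ι → ℕ}
    (hk : ∀ i ∈ s, k i ≤ K) :
    (∏ i ∈ s, K.descFactorial (k i)) * Nat.multinomial s (fun _ => K) =
      (#s * K).descFactorial (∑ i ∈ s, k i) * Nat.multinomial s (fun i => K - k i) := by
  have hsumK : ∑ _i ∈ s, K = #s * K := by rw [sum_const, smul_eq_mul]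
  have hsum_sub : ∑ i ∈ s, (K - k i) = #s * K - ∑ i ∈ s, k i := by
    rw [sum_tsub_distrib s hk, hsumK]
  have hk_le : ∑ i ∈ s, k i ≤ #s * K := hsumK ▸ sum_le_sum hk
  refine Nat.eq_of_mul_eq_mul_left (n := ∏ i ∈ s, (K - k i).factorial)
    (prod_pos fun i _ => (K - k i).factorial_pos) ?_
  calc (∏ i ∈ s, (K - k i).factorial) *
        ((∏ i ∈ s, K.descFactorial (k i)) * Nat.multinomial s (fun _ => K))
      = (∏ _i ∈ s, K.factorial) * Nat.multinomial s (fun _ => K) := by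
        rw [← mul_assoc, ← prod_mul_distrib]
        congr 1
        exact prod_congr rfl fun i hi => Nat.factorial_mul_descFactorial (hk i hi)
    _ = (#s * K).factorial := by rw [Nat.multinomial_spec, hsumK]
    _ = (#s * K - ∑ i ∈ s, k i).factorial * (#s * K).descFactorial (∑ i ∈ s, k i) :=
        (Nat.factorial_mul_descFactorial hk_le).symm
    _ = _ := by
        rw [← hsum_sub, ← Nat.multinomial_spec]
        ring

theorem pow_sum_mul_prod_descFactorial {ι : Type*} (s : Finset ι) (q K : ℕ) (k : ι → ℕ) :
    q ^ (∑ i ∈ s, k i) * ∏ i ∈ s, K.descFactorial (k i) =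
      ∏ i ∈ s, ∏ j ∈ range (k i), (q * K - q * j) := by
  rw [← prod_pow_eq_pow_sum, ← prod_mul_distrib]
  refine prod_congr rfl fun i _ => ?_
  rw [Nat.descFactorial_eq_prod_range, pow_eq_prod_const, ← prod_mul_distrib]
  exact prod_congr rfl fun j _ => Nat.mul_sub q K j

theorem le_of_one_le_rnDeriv {d K n : ℕ} {lam : Fin (2 * d) → ℕ} (hf : 1 ≤ rnDeriv d K n lam)
    (i : Fin (2 * d)) : lam i ≤ K := by
  by_contra hlt
  have hmcoef : mcoef (fun ℓ => (K : ℤ) - (lam ℓ : ℤ)) = 0 :=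
    if_neg fun h => hlt (by have := h i; dsimp only at this; omega)
  norm_num [rnDeriv, hmcoef] at hf

theorem descFactorial_le_of_one_le_rnDeriv {d K n : ℕ} {lam : Fin (2 * d) → ℕ}
    (hsum : ∑ i, lam i = n) (hf : 1 ≤ rnDeriv d K n lam) :
    (2 * d * K).descFactorial n ≤ (2 * d) ^ n * ∏ i, K.descFactorial (lam i) := by
  have hK : ∀ i, lam i ≤ K := le_of_one_le_rnDeriv hf
  have hmcoef :
      mcoef (fun ℓ => (K : ℤ) - (lam ℓ : ℤ)) = Nat.multinomial univ (fun i => K - lam i) :=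
    (if_pos fun i => by have := hK i; dsimp only; omega).trans
      (by congr 1; funext i; dsimp only; omega)
  have hmult := Nat.multinomial_pos (univ : Finset (Fin (2 * d))) fun _ => K
  rw [rnDeriv, hmcoef, one_le_div (by exact_mod_cast hmult)] at hf
  have hf' : Nat.multinomial univ (fun _ : Fin (2 * d) => K) ≤
      (2 * d) ^ n * Nat.multinomial univ (fun i => K - lam i) := by exact_mod_cast hf
  have hid := Nat.prod_descFactorial_mul_multinomial univ fun i _ => hK i
  rw [card_univ, Fintype.card_fin, hsum] at hid
  refine Nat.le_of_mul_le_mul_right ?_ hmult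
  calc (2 * d * K).descFactorial n * Nat.multinomial univ (fun _ : Fin (2 * d) => K)
      ≤ (2 * d * K).descFactorial n * ((2 * d) ^ n * Nat.multinomial univ (fun i => K - lam i)) :=
        Nat.mul_le_mul_left _ hf'
    _ = (2 * d) ^ n * ((∏ i, K.descFactorial (lam i)) * Nat.multinomial univ fun _ => K) := by
        rw [hid]
        ring
    _ = _ := (mul_assoc _ _ _).symm

theorem sub_card_mul_le_of_sum_eq_zero {ι : Type*} [Fintype ι] {A : ι → ℝ} {C : ℝ}
    (hsum : ∑ i, A i = 0) (hle : ∀ i, A i ≤ C) (i : ι) : C - Fintype.card ι * C ≤ A i := by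
  have h := single_le_sum (f := fun j => C - A j) (fun j _ => sub_nonneg.2 (hle j)) (mem_univ i)
  rw [sum_sub_distrib, hsum, sum_const, card_univ, nsmul_eq_mul] at h
  linarith

theorem mul_sqrt_eq_of_eq_div {d n l : ℕ} {a : ℝ} (hd : 0 < d)
    (h : (l : ℝ) = (n + a * √n) / (2 * d)) : a * √n = 2 * d * l - n := by
  rw [h]
  field_simp
  ring

theorem sum_eq_zero_of_mem_Phi {d : ℕ} {K : ℕ → ℕ} {n : ℕ} {A : Fin (2 * d) → ℝ} (hd : 0 < d)
    (hn : 1 ≤ n) (hA : A ∈ Phi d K n) : ∑ i, A i = 0 := by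
  obtain ⟨lam, hlam, hsum, -⟩ := hA
  have hsumR : ∑ i, (lam i : ℝ) = n := by exact_mod_cast hsum
  have hsqrt : 0 < √(n : ℝ) := Real.sqrt_pos.2 (by exact_mod_cast hn)
  have h : (∑ i, A i) * √n = 0 := by
    rw [sum_mul, sum_congr rfl fun i _ => mul_sqrt_eq_of_eq_div hd (hlam i), sum_sub_distrib,
      ← mul_sum, hsumR, sum_const, card_univ, Fintype.card_fin, nsmul_eq_mul]
    push_cast
    ring
  exact (mul_eq_zero.1 h).resolve_right hsqrt.ne'

theorem le_of_mem_Phi {d : ℕ} {K : ℕ → ℕ} {n : ℕ} {A : Fin (2 * d) → ℝ} (hd : 0 < d)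
    (hn : 1 ≤ n) (hKn : n ≤ K n) (hA : A ∈ Phi d K n) (i : Fin (2 * d)) :
    A i ≤ 2 * d + 4 * d ^ 2 := by
  obtain ⟨lam, hlam, hsum, hf⟩ := hA
  set μ := n / (2 * d) + 1
  have hμ : n ≤ 2 * d * μ := (Nat.lt_mul_div_succ n (by omega)).le
  have hμ' : 2 * d * μ ≤ n + 2 * d := by
    rw [Nat.mul_add, mul_one]
    linarith [Nat.mul_div_le n (2 * d)]
  have hdesc := descFactorial_le_of_one_le_rnDeriv hsum hf
  have hchain := pow_sum_mul_prod_descFactorial univ (2 * d) (K n) lam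
  rw [hsum] at hchain
  rw [hchain] at hdesc
  have hsq := sub_sq_le_of_descFactorial_le hsum (Nat.mul_le_mul (by omega) hKn) hdesc i hμ
  have hdR : (1 : ℝ) ≤ d := by exact_mod_cast hd
  have hnR : (1 : ℝ) ≤ n := by exact_mod_cast hn
  have hsqrt : 1 ≤ √(n : ℝ) := Real.one_le_sqrt.2 hnR
  have hδ : ((lam i - μ : ℕ) : ℝ) ≤ 2 * d * √n := by
    refine (pow_le_pow_iff_left₀ (Nat.cast_nonneg _) (by positivity) two_ne_zero).1 ?_
    rw [mul_pow, Real.sq_sqrt (by positivity)]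
    push_cast at hsq
    nlinarith
  have hlamμ : (lam i : ℝ) ≤ μ + (lam i - μ : ℕ) := by exact_mod_cast le_add_tsub
  have hμR : (2 * d * μ : ℝ) ≤ n + 2 * d := by exact_mod_cast hμ'
  have h : A i * √n ≤ (2 * d + 4 * d ^ 2) * √n := by
    rw [mul_sqrt_eq_of_eq_div hd (hlam i)]
    nlinarith
  exact le_of_mul_le_mul_right h (by positivity)

/-- Uniform boundedness of `⋃_{n ≥ 1} Φ_n`. -/
theorem Phi_union_bounded (d : ℕ) (hd : 0 < d) (c : ℝ) (hc : 2*d ≤ c)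
    (K : ℕ → ℕ) (hK : ∀ n : ℕ, ((2*d*K n : ℕ) : ℝ) = c * n) :
    Bornology.IsBounded {A : Fin (2*d) → ℝ | ∃ n : ℕ, 1 ≤ n ∧ A ∈ Phi d K n} := by
  set C : ℝ := 2 * d + 4 * d ^ 2
  refine (Metric.isBounded_Icc (fun _ => C - 2 * d * C) fun _ => C).subset ?_
  rintro A ⟨n, hn, hA⟩
  have hKn : n ≤ K n := by
    have h : ((2 * d * n : ℕ) : ℝ) ≤ ((2 * d * K n : ℕ) : ℝ) := by
      rw [hK]
      push_cast
      exact mul_le_mul_of_nonneg_right hc n.cast_nonneg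
    exact Nat.le_of_mul_le_mul_left (by exact_mod_cast h) (by omega)
  have hle := le_of_mem_Phi hd hn hKn hA
  refine ⟨fun i => ?_, hle⟩
  simpa using sub_card_mul_le_of_sum_eq_zero (sum_eq_zero_of_mem_Phi hd hn hA) hle i
end
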